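/- arXiv:2509.26550 — 2 statements merged into one kernel-verified Lean document; each statement's English description precedes it below -/
import Mathlib

section
/- Let φ : M → M be a bijection on a set M, ω : M → ℝ^d a bounded function, A ∈ ℝ^{N×N} with ρ(A) < 1, and C ∈ ℝ^{N×d}. Define f(x) = ∑_{k=0}^∞ Aᵏ C ω(φ^{-k}(x)). Then f satisfies the consistency relation f(φ(x)) = A f(x) + C ω(φ(x)) for all x ∈ M. -/
open Matrix Filter Topology MeasureTheory ProbabilityTheory

attribute [local instance] Matrix.linftyOpNormedRing Matrix.linftyOpNormedAddCommGroup

/-- The spectral radius of a real square matrix: the maximum modulus of its complex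
eigenvalues. -/
noncomputable def specRad {N : ℕ} (A : Matrix (Fin N) (Fin N) ℝ) : ℝ :=
  sSup ((fun z : ℂ => ‖z‖) '' spectrum ℂ (A.map Complex.ofReal))

/-! By Gelfand's formula, `specRad A < 1` gives `‖Aᵏ‖ ≤ rᵏ` for some `r < 1` and all large `k`,
so the series defining `f` converges absolutely when `ω` is bounded. At `φ x` its `k = 0` term is
`C ω(φ x)`, and since `φ⁻⁽ᵏ⁺¹⁾(φ x) = φ⁻ᵏ x`, its remaining terms are `A` applied to the terms of
the series for `f x`. -/

attribute [local instance] Matrix.linftyOpNormedAlgebra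

open scoped NNReal ENNReal

theorem Matrix.linfty_opNorm_map_eq {m n α β : Type*} [Fintype m] [Fintype n] [NormedAddCommGroup α]
    [NormedAddCommGroup β] (A : Matrix m n α) (f : α → β) (hf : ∀ a, ‖f a‖₊ = ‖a‖₊) :
    ‖A.map f‖ = ‖A‖ := by
  simp only [← coe_nnnorm, linfty_opNNNorm_def, map_apply, hf]

theorem Matrix.mulVec_tsum {ι m n R : Type*} [Fintype n] [CommSemiring R] [TopologicalSpace R]
    [IsTopologicalSemiring R] [T2Space R] (A : Matrix m n R) {g : ι → n → R} (hg : Summable g) :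
    A *ᵥ ∑' i, g i = ∑' i, A *ᵥ g i :=
  ((hg.hasSum.map A.mulVecLin (continuous_const.matrix_mulVec continuous_id)).tsum_eq).symm

theorem eventually_norm_pow_le_of_spectralRadius_lt {A : Type*} [NormedRing A] [NormedAlgebra ℂ A]
    [CompleteSpace A] {a : A} {r : ℝ≥0} (h : spectralRadius ℂ a < r) :
    ∀ᶠ n : ℕ in atTop, ‖a ^ n‖ ≤ r ^ n := by
  have gelfand := spectrum.pow_nnnorm_pow_one_div_tendsto_nhds_spectralRadius a
  filter_upwards [gelfand.eventually_lt_const h, eventually_ge_atTop 1] with n hn hn1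
  rw [one_div, ENNReal.rpow_inv_lt_iff (Nat.cast_pos.mpr hn1), ENNReal.rpow_natCast,
    ← ENNReal.coe_pow, ENNReal.coe_lt_coe] at hn
  exact_mod_cast hn.le

theorem summable_norm_pow_of_spectralRadius_lt_one {A : Type*} [NormedRing A] [NormedAlgebra ℂ A]
    [CompleteSpace A] {a : A} (h : spectralRadius ℂ a < 1) :
    Summable fun n : ℕ => ‖a ^ n‖ := by
  obtain ⟨r, har, hr1⟩ := ENNReal.lt_iff_exists_nnreal_btwn.mp h
  have hgeom := summable_geometric_of_lt_one r.coe_nonneg (by exact_mod_cast hr1)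
  refine hgeom.of_norm_bounded_eventually_nat ?_
  filter_upwards [eventually_norm_pow_le_of_spectralRadius_lt har] with n hn
  rwa [norm_norm]

theorem spectralRadius_map_ofReal_le_specRad {N : ℕ} (A : Matrix (Fin N) (Fin N) ℝ) :
    spectralRadius ℂ (A.map Complex.ofReal) ≤ ENNReal.ofReal (specRad A) :=
  iSup₂_le fun z hz => by
    rw [← ENNReal.ofReal_coe_nnreal, coe_nnnorm]
    exact ENNReal.ofReal_le_ofReal
      (le_csSup ((spectrum.isCompact _).image continuous_norm).bddAbove ⟨z, hz, rfl⟩)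

theorem summable_norm_pow_of_specRad_lt_one {N : ℕ} {A : Matrix (Fin N) (Fin N) ℝ}
    (hA : specRad A < 1) : Summable fun k : ℕ => ‖A ^ k‖ := by
  have hB : spectralRadius ℂ (A.map Complex.ofReal) < 1 :=
    (spectralRadius_map_ofReal_le_specRad A).trans_lt (ENNReal.ofReal_lt_one.mpr hA)
  refine (summable_norm_pow_of_spectralRadius_lt_one hB).congr fun k => ?_
  have hmap : A.map Complex.ofReal = Complex.ofRealHom.mapMatrix A := rfl
  rw [hmap, ← map_pow, RingHom.mapMatrix_apply,
    linfty_opNorm_map_eq _ Complex.ofRealHom Complex.nnnorm_real]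

theorem summable_pow_mul_mulVec {m n R : Type*} [Fintype m] [Fintype n] [DecidableEq m]
    [NormedCommRing R] [CompleteSpace R] {A : Matrix m m R} (hA : Summable fun k : ℕ => ‖A ^ k‖)
    (C : Matrix m n R) {u : ℕ → n → R} {K : ℝ} (hu : ∀ k, ‖u k‖ ≤ K) :
    Summable fun k => (A ^ k * C) *ᵥ u k := by
  refine (hA.mul_right (‖C‖ * K)).of_norm_bounded fun k => ?_
  calc ‖(A ^ k * C) *ᵥ u k‖ ≤ ‖A ^ k * C‖ * ‖u k‖ := linfty_opNorm_mulVec _ _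
    _ ≤ ‖A ^ k‖ * ‖C‖ * K := by gcongr; exacts [linfty_opNorm_mul _ _, hu k]
    _ = ‖A ^ k‖ * (‖C‖ * K) := mul_assoc _ _ _

theorem stmt_3 {N d : ℕ} {M : Type*} (φ : M ≃ M) (ω : M → Fin d → ℝ)
    (hω : ∃ K : ℝ, ∀ x, ‖ω x‖ ≤ K)
    (A : Matrix (Fin N) (Fin N) ℝ) (hA : specRad A < 1)
    (C : Matrix (Fin N) (Fin d) ℝ)
    (f : M → Fin N → ℝ)
    (hf : ∀ x, f x = ∑' k : ℕ, (A ^ k * C).mulVec (ω ((⇑φ.symm)^[k] x))) :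
    ∀ x : M, f (φ x) = A.mulVec (f x) + C.mulVec (ω (φ x)) := by
  intro x
  obtain ⟨K, hK⟩ := hω
  have hsum : ∀ y, Summable fun k : ℕ => (A ^ k * C) *ᵥ ω ((⇑φ.symm)^[k] y) := fun y =>
    summable_pow_mul_mulVec (summable_norm_pow_of_specRad_lt_one hA) C fun k => hK _
  have hshift : ∀ k : ℕ, (A ^ (k + 1) * C) *ᵥ ω ((⇑φ.symm)^[k + 1] (φ x))
      = A *ᵥ ((A ^ k * C) *ᵥ ω ((⇑φ.symm)^[k] x)) := fun k => by
    rw [Function.iterate_succ_apply, Equiv.symm_apply_apply, pow_succ', Matrix.mul_assoc,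
      mulVec_mulVec]
  rw [hf, hf, (hsum (φ x)).tsum_eq_zero_add, mulVec_tsum A (hsum x)]
  simp only [hshift, pow_zero, Matrix.one_mul, Function.iterate_zero_apply]
  exact add_comm _ _
end

section
/- Let A ∈ ℝ^{N×N} with ρ(A) < 1, φ : M → M a bijection, ω : M → ℝ^d bounded, C ∈ ℝ^{N×d}, and f(x) = ∑_{k=0}^∞ Aᵏ C ω(φ^{-k}(x)). For any m ∈ M and t ≥ 1, ‖∑_{k=0}^{t-1} A^{t-1-k} C ω(φ^{k+1}(m)) − f(φᵗ(m))‖ ≤ ‖Aᵗ‖ · sup_{x} ‖f(x)‖, which tends to 0 as t → ∞. -/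
open Matrix Filter Topology MeasureTheory ProbabilityTheory
open scoped NNReal ENNReal

attribute [local instance] Matrix.linftyOpNormedRing Matrix.linftyOpNormedAddCommGroup

attribute [local instance] Matrix.linftyOpNormedAlgebra

-- norm of complexified matrix
lemma nnnorm_map_ofReal {N : ℕ} (B : Matrix (Fin N) (Fin N) ℝ) :
    ‖B.map (Complex.ofReal)‖₊ = ‖B‖₊ := by
  simp [Matrix.linfty_opNNNorm_def, Matrix.map_apply]

lemma geom_bound {N : ℕ} (A : Matrix (Fin N) (Fin N) ℝ) (hA : specRad A < 1) :
    ∃ r : ℝ≥0, r < 1 ∧ ∀ᶠ n in atTop, ‖A ^ n‖₊ ≤ r ^ n := by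
  classical
  set B := A.map Complex.ofReal with hB
  haveI : CompleteSpace (Matrix (Fin N) (Fin N) ℂ) := FiniteDimensional.complete ℂ _
  have hρ : spectralRadius ℂ B < 1 := by
    have h1 : spectralRadius ℂ B ≤ ENNReal.ofReal (specRad A) := by
      refine iSup₂_le fun k hk => ?_
      rw [← enorm_eq_nnnorm, ← ofReal_norm]
      refine ENNReal.ofReal_le_ofReal ?_
      have : ‖k‖ ∈ (fun z : ℂ => ‖z‖) '' spectrum ℂ B := Set.mem_image_of_mem _ hk
      exact le_csSup (((Matrix.finite_spectrum B).image _).bddAbove) this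
    exact lt_of_le_of_lt h1 (ENNReal.ofReal_lt_one.mpr hA)
  obtain ⟨c, hc1, hc2⟩ := exists_between hρ
  have hct : c ≠ ⊤ := (hc2.trans_le le_top).ne
  have hgel := spectrum.pow_nnnorm_pow_one_div_tendsto_nhds_spectralRadius B
  have hev : ∀ᶠ n : ℕ in atTop, (‖B ^ n‖₊ : ℝ≥0∞) ^ (1 / (n : ℝ)) < c :=
    hgel.eventually_lt_const hc1
  refine ⟨c.toNNReal, ?_, ?_⟩
  · rw [← ENNReal.coe_lt_one_iff, ENNReal.coe_toNNReal hct]; exact hc2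
  · filter_upwards [hev, eventually_ge_atTop 1] with n hn hn1
    have hx : (‖B ^ n‖₊ : ℝ≥0∞) ≤ c ^ n := by
      have h1 := pow_le_pow_left' hn.le n
      rwa [← ENNReal.rpow_natCast ((‖B ^ n‖₊ : ℝ≥0∞) ^ (1 / (n:ℝ))) n, ← ENNReal.rpow_mul,
        one_div, inv_mul_cancel₀
          (by exact_mod_cast Nat.one_le_iff_ne_zero.mp hn1 : (n:ℝ) ≠ 0),
        ENNReal.rpow_one] at h1
    have hBn : ‖B ^ n‖₊ = ‖A ^ n‖₊ := by
      have : B ^ n = (A ^ n).map Complex.ofReal := by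
        exact (map_pow (Complex.ofRealHom.mapMatrix
          (m := Fin N)) A n).symm
      rw [this, nnnorm_map_ofReal]
    rw [← hBn]
    have hcn : c ^ n = ((c.toNNReal ^ n : ℝ≥0) : ℝ≥0∞) := by
      rw [ENNReal.coe_pow, ENNReal.coe_toNNReal hct]
    exact_mod_cast hx.trans_eq hcn

theorem stmt_12 {N d : ℕ} {M : Type*} (A : Matrix (Fin N) (Fin N) ℝ)
    (hA : specRad A < 1) (φ : M ≃ M) (ω : M → Fin d → ℝ)
    (hω : ∃ K : ℝ, ∀ x, ‖ω x‖ ≤ K) (C : Matrix (Fin N) (Fin d) ℝ)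
    (f : M → Fin N → ℝ)
    (hf : ∀ x, f x = ∑' k : ℕ, (A ^ k * C).mulVec (ω ((⇑φ.symm)^[k] x))) :
    (∀ (m : M) (t : ℕ), 1 ≤ t →
      ‖(∑ k ∈ Finset.range t, (A ^ (t - 1 - k) * C).mulVec (ω ((⇑φ)^[k + 1] m))) -
          f ((⇑φ)^[t] m)‖ ≤ ‖A ^ t‖ * ⨆ x : M, ‖f x‖) ∧
      Tendsto (fun t : ℕ => ‖A ^ t‖ * ⨆ x : M, ‖f x‖) atTop (𝓝 0) := by
  obtain ⟨r, hr1, hev⟩ := geom_bound A hA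
  have hrr : (r : ℝ) < 1 := by exact_mod_cast hr1
  have hevR : ∀ᶠ n : ℕ in atTop, ‖A ^ n‖ ≤ (r : ℝ) ^ n := by
    filter_upwards [hev] with n hn
    exact_mod_cast hn
  obtain ⟨K, hK⟩ := hω
  set K' : ℝ := max K 0 with hK'def
  have hK' : ∀ x, ‖ω x‖ ≤ K' := fun x => (hK x).trans (le_max_left _ _)
  have hK'0 : (0:ℝ) ≤ K' := le_max_right _ _
  -- summability of ‖A^n‖
  have hsA : Summable (fun n : ℕ => ‖A ^ n‖) := by
    obtain ⟨n0, hn0⟩ := eventually_atTop.mp hevR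
    have hgeo : Summable (fun n : ℕ => (r:ℝ) ^ n * (r:ℝ) ^ n0) :=
      (summable_geometric_of_lt_one r.coe_nonneg hrr).mul_right _
    have h1 : Summable (fun n : ℕ => ‖A ^ (n + n0)‖) := by
      refine Summable.of_nonneg_of_le (fun n => norm_nonneg _) (fun n => ?_) hgeo
      rw [← pow_add]
      exact hn0 (n + n0) (Nat.le_add_left _ _)
    exact (summable_nat_add_iff n0).mp h1
  have hterm : ∀ (k : ℕ) (w : Fin d → ℝ), ‖w‖ ≤ K' →
      ‖(A ^ k * C).mulVec w‖ ≤ ‖A ^ k‖ * (‖C‖ * K') := by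
    intro k w hw
    calc ‖(A ^ k * C).mulVec w‖ ≤ ‖A ^ k * C‖ * ‖w‖ := Matrix.linfty_opNorm_mulVec _ _
      _ ≤ (‖A ^ k‖ * ‖C‖) * K' :=
          mul_le_mul (Matrix.linfty_opNorm_mul _ _) hw (norm_nonneg _) (by positivity)
      _ = ‖A ^ k‖ * (‖C‖ * K') := mul_assoc _ _ _
  have hsbound : Summable (fun k : ℕ => ‖A ^ k‖ * (‖C‖ * K')) := hsA.mul_right _
  have hsum : ∀ v : ℕ → M, Summable (fun k => (A ^ k * C).mulVec (ω (v k))) := fun v =>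
    Summable.of_norm_bounded hsbound (fun k => hterm k _ (hK' _))
  set S : ℝ := (∑' k : ℕ, ‖A ^ k‖) * (‖C‖ * K') with hSdef
  have hfb : ∀ x, ‖f x‖ ≤ S := by
    intro x
    rw [hf x]
    have hns : Summable (fun k : ℕ => ‖(A ^ k * C).mulVec (ω ((⇑φ.symm)^[k] x))‖) :=
      Summable.of_nonneg_of_le (fun k => norm_nonneg _) (fun k => hterm k _ (hK' _)) hsbound
    refine (norm_tsum_le_tsum_norm hns).trans ?_
    refine (Summable.tsum_le_tsum (fun k => hterm k _ (hK' _)) hns hsbound).trans_eq ?_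
    exact tsum_mul_right
  have hbdd : BddAbove (Set.range fun x : M => ‖f x‖) := by
    refine ⟨S, ?_⟩; rintro - ⟨x, rfl⟩; exact hfb x
  constructor
  · intro m t ht
    have hiter : ∀ k ≤ t, (⇑φ.symm)^[k] ((⇑φ)^[t] m) = (⇑φ)^[t - k] m := by
      intro k hk
      have h1 : (⇑φ)^[t] m = (⇑φ)^[k] ((⇑φ)^[t - k] m) := by
        rw [← Function.iterate_add_apply, Nat.add_sub_cancel' hk]
      rw [h1, Function.LeftInverse.iterate φ.symm_apply_apply k _]
    have hiter2 : ∀ j : ℕ, (⇑φ.symm)^[j + t] ((⇑φ)^[t] m) = (⇑φ.symm)^[j] m := by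
      intro j
      rw [Function.iterate_add_apply]
      congr 1
      simpa using hiter t le_rfl
    set g : ℕ → (Fin N → ℝ) :=
      fun k => (A ^ k * C).mulVec (ω ((⇑φ.symm)^[k] ((⇑φ)^[t] m))) with hgdef
    set g' : ℕ → (Fin N → ℝ) :=
      fun j => (A ^ j * C).mulVec (ω ((⇑φ.symm)^[j] m)) with hg'def
    have hg : Summable g := hsum _
    have hg' : Summable g' := hsum _
    have hsplit : (∑ k ∈ Finset.range t, g k) + ∑' j : ℕ, g (j + t) = ∑' k, g k :=
      Summable.sum_add_tsum_nat_add t hg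
    have htail : (∑' j : ℕ, g (j + t)) = (A ^ t).mulVec (f m) := by
      have hterm2 : ∀ j : ℕ, g (j + t) = (A ^ t).mulVec (g' j) := by
        intro j
        simp only [hgdef, hg'def, hiter2 j, Matrix.mulVec_mulVec]
        rw [add_comm j t, pow_add, Matrix.mul_assoc]
      rw [funext hterm2]
      let L : (Fin N → ℝ) →L[ℝ] (Fin N → ℝ) :=
        LinearMap.toContinuousLinearMap (Matrix.mulVecLin (A ^ t))
      have : ∑' j : ℕ, L (g' j) = L (∑' j, g' j) := (L.map_tsum hg').symm
      simpa [L, hf m, hg'def] using this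
    have hre : (∑ k ∈ Finset.range t, (A ^ (t - 1 - k) * C).mulVec (ω ((⇑φ)^[k + 1] m)))
        = ∑ k ∈ Finset.range t, g k := by
      rw [← Finset.sum_range_reflect g t]
      refine Finset.sum_congr rfl fun k hk => ?_
      have hk' : k < t := Finset.mem_range.mp hk
      have h1 : t - (t - 1 - k) = k + 1 := by omega
      rw [hgdef]
      simp only []
      rw [hiter (t - 1 - k) (by omega), h1]
    have hkey : (∑ k ∈ Finset.range t, (A ^ (t - 1 - k) * C).mulVec (ω ((⇑φ)^[k + 1] m)))
        - f ((⇑φ)^[t] m) = -((A ^ t).mulVec (f m)) := by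
      rw [hre, hf ((⇑φ)^[t] m)]
      have : (∑' k, g k) = (∑ k ∈ Finset.range t, g k) + (A ^ t).mulVec (f m) := by
        rw [← hsplit, htail]
      rw [← hgdef] at this ⊢
      rw [this]
      abel
    rw [hkey, norm_neg]
    calc ‖(A ^ t).mulVec (f m)‖ ≤ ‖A ^ t‖ * ‖f m‖ := Matrix.linfty_opNorm_mulVec _ _
      _ ≤ ‖A ^ t‖ * ⨆ x : M, ‖f x‖ :=
          mul_le_mul_of_nonneg_left (le_ciSup hbdd m) (norm_nonneg _)
  · have hA0 : Tendsto (fun t : ℕ => ‖A ^ t‖) atTop (𝓝 0) :=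
      squeeze_zero' (Eventually.of_forall fun n => norm_nonneg _) hevR
        (tendsto_pow_atTop_nhds_zero_of_lt_one r.coe_nonneg hrr)
    simpa using hA0.mul_const (⨆ x : M, ‖f x‖)
end
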